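/- Let c ≥ 5041 be an integer with σ(c)/c ≥ e^γ · log(log c), and suppose that every integer m with 5041 ≤ m < c satisfies σ(m)/m < e^γ · log(log m) (i.e., c is the least counterexample to Robin's inequality). Then for every prime q dividing c, if a denotes the multiplicity of q in the prime factorization of c, then q^a < q · exp(M(ω(c))). -/

import Mathlib

open Real Finset

/-- `Nk k` is the `k`-th primorial: the product of the first `k` primes
(`Nat.nth Nat.Prime i` is the `(i+1)`-st prime, so `Nat.nth Nat.Prime 0 = 2`). -/
noncomputable def Nk (k : ℕ) : ℕ := ∏ i ∈ Finset.range k, Nat.nth Nat.Prime i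

/-- `M k = exp (e^(-γ) * N_k / φ(N_k)) - log N_k`. -/
noncomputable def M (k : ℕ) : ℝ :=
  Real.exp (Real.exp (-Real.eulerMascheroniConstant) * (Nk k : ℝ) / (Nat.totient (Nk k) : ℝ))
    - Real.log (Nk k)

/-!
For a prime power, `σ(q^a)/q^a < q/(q-1)`, so `σ(c)/c < ∏_{p ∣ c} p/(p-1)`. Listing the `k = ω(c)`
prime factors of `c` in increasing order, the `i`-th one is at least `p_i`; since `x ↦ x/(x-1)`
decreases, the product is at most `∏_{i<k} p_i/(p_i-1) = N_k/φ(N_k)`. Together with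
`σ(c)/c ≥ e^γ log log c` this gives `log c < exp(e^{-γ} N_k/φ(N_k))`, i.e. `c < e^{M(k)} N_k`.
Finally `q^(a-1) N_k ≤ q^(a-1) ∏_{p ∣ c} p ≤ c`, whence `q^(a-1) < e^{M(k)}`.
-/

lemma sigma_one_prime_pow_div_lt {p : ℕ} (hp : p.Prime) (a : ℕ) :
    (ArithmeticFunction.sigma 1 (p ^ a) : ℝ) / (p ^ a : ℕ) < p / (p - 1) := by
  have hp1 : (1 : ℝ) < p := by exact_mod_cast hp.one_lt
  have hgeom : (∑ j ∈ range (a + 1), (p : ℝ) ^ j) * (p - 1) = p ^ (a + 1) - 1 :=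
    geom_sum_mul (p : ℝ) (a + 1)
  rw [ArithmeticFunction.sigma_one_apply_prime_pow hp]
  push_cast
  rw [div_lt_div_iff₀ (by positivity) (by linarith), hgeom, pow_succ]
  linarith

lemma sigma_one_div_lt_prod_primeFactors {n : ℕ} (hn : 1 < n) :
    (ArithmeticFunction.sigma 1 n : ℝ) / n < ∏ p ∈ n.primeFactors, (p : ℝ) / (p - 1) := by
  have hn0 : n ≠ 0 := by omega
  have hσ := ArithmeticFunction.isMultiplicative_sigma (k := 1)
    |>.multiplicative_factorization _ hn0
  have hn' := Nat.prod_factorization_pow_eq_self hn0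
  rw [Finsupp.prod, Nat.support_factorization] at hσ hn'
  rw [hσ, ← Nat.cast_inj (R := ℝ).2 hn', Nat.cast_prod, Nat.cast_prod, ← prod_div_distrib]
  refine prod_lt_prod_of_nonempty (fun p hp => ?_) (fun p hp => ?_)
    (Nat.nonempty_primeFactors.2 hn)
  · have hp := Nat.prime_of_mem_primeFactors hp
    have := ArithmeticFunction.sigma_pos 1 (p ^ n.factorization p) (pow_ne_zero _ hp.ne_zero)
    exact div_pos (by exact_mod_cast this) (by exact_mod_cast pow_pos hp.pos _)
  · exact_mod_cast sigma_one_prime_pow_div_lt (Nat.prime_of_mem_primeFactors hp) _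

lemma Nat.nth_le_orderEmbOfFin {P : ℕ → Prop} [DecidablePred P] (hP : (Set.ofPred P).Infinite)
    {s : Finset ℕ} (hs : ∀ x ∈ s, P x) (i : Fin s.card) :
    Nat.nth P i ≤ s.orderEmbOfFin rfl i := by
  set e := s.orderEmbOfFin rfl
  have hcount : (i : ℕ) ≤ Nat.count P (e i) := by
    rw [Nat.count_eq_card_filter_range, ← Fin.card_Iio]
    refine card_le_card_of_injOn e (fun j hj => ?_) e.injective.injOn
    simp only [coe_Iio, Set.mem_Iio] at hj
    simp only [coe_filter, mem_range, Set.mem_ofPred_eq]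
    exact ⟨e.strictMono hj, hs _ (s.orderEmbOfFin_mem rfl j)⟩
  calc Nat.nth P i ≤ Nat.nth P (Nat.count P (e i)) := Nat.nth_monotone hP hcount
    _ = e i := Nat.nth_count (hs _ (s.orderEmbOfFin_mem rfl i))

lemma Finset.prod_eq_prod_orderEmbOfFin {α β : Type*} [LinearOrder α] [CommMonoid β]
    (s : Finset α) (f : α → β) :
    ∏ x ∈ s, f x = ∏ i : Fin s.card, f (s.orderEmbOfFin rfl i) := by
  conv_lhs => rw [← s.map_orderEmbOfFin_univ rfl, prod_map]
  rfl

lemma Nk_card_le_prod {s : Finset ℕ} (hs : ∀ p ∈ s, p.Prime) : Nk s.card ≤ ∏ p ∈ s, p := by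
  rw [Nk, ← Fin.prod_univ_eq_prod_range, s.prod_eq_prod_orderEmbOfFin]
  exact prod_le_prod' fun i _ => Nat.nth_le_orderEmbOfFin Nat.infinite_setOfPred_prime hs i

lemma prod_div_sub_one_le_prod_nth_prime {s : Finset ℕ} (hs : ∀ p ∈ s, p.Prime) :
    ∏ p ∈ s, (p : ℝ) / (p - 1) ≤
      ∏ i ∈ range s.card, (Nat.nth Nat.Prime i : ℝ) / (Nat.nth Nat.Prime i - 1) := by
  rw [← Fin.prod_univ_eq_prod_range, s.prod_eq_prod_orderEmbOfFin]
  refine prod_le_prod (fun i _ => ?_) (fun i _ => ?_)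
  · have : (2 : ℝ) ≤ s.orderEmbOfFin rfl i := by
      exact_mod_cast (hs _ (s.orderEmbOfFin_mem rfl i)).two_le
    exact div_nonneg (by linarith) (by linarith)
  · have h2 : (2 : ℝ) ≤ Nat.nth Nat.Prime i := by exact_mod_cast (Nat.prime_nth_prime i).two_le
    have hle : (Nat.nth Nat.Prime i : ℝ) ≤ s.orderEmbOfFin rfl i := by
      exact_mod_cast Nat.nth_le_orderEmbOfFin Nat.infinite_setOfPred_prime hs i
    rw [div_le_div_iff₀ (by linarith) (by linarith)]
    nlinarith

lemma div_totient_eq_prod_primeFactors {n : ℕ} (hn : n ≠ 0) :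
    (n : ℝ) / n.totient = ∏ p ∈ n.primeFactors, (p : ℝ) / (p - 1) := by
  have hprod : ((n.totient * ∏ p ∈ n.primeFactors, p : ℕ) : ℝ) =
      ((n * ∏ p ∈ n.primeFactors, (p - 1) : ℕ) : ℝ) :=
    congrArg _ (Nat.totient_mul_prod_primeFactors n)
  have hcast : ∀ p ∈ n.primeFactors, ((p - 1 : ℕ) : ℝ) = p - 1 := fun p hp =>
    Nat.cast_pred (Nat.pos_of_mem_primeFactors hp)
  push_cast [prod_congr rfl hcast] at hprod
  have hφ : (n.totient : ℝ) ≠ 0 := by exact_mod_cast (Nat.totient_pos.2 (by omega)).ne'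
  have hden : ∏ p ∈ n.primeFactors, ((p : ℝ) - 1) ≠ 0 := prod_ne_zero_iff.2 fun p hp => by
    have : (2 : ℝ) ≤ p := by exact_mod_cast (Nat.prime_of_mem_primeFactors hp).two_le
    linarith
  rw [prod_div_distrib, div_eq_div_iff hφ hden, ← hprod, mul_comm]

lemma primeFactors_Nk (k : ℕ) :
    (Nk k).primeFactors =
      (range k).map ⟨Nat.nth Nat.Prime, Nat.nth_injective Nat.infinite_setOfPred_prime⟩ := by
  have hNk :
      Nk k = ∏ p ∈ (range k).map ⟨_, Nat.nth_injective Nat.infinite_setOfPred_prime⟩, p := by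
    rw [prod_map]; rfl
  rw [hNk]
  exact Nat.primeFactors_prod fun p hp => by
    obtain ⟨i, -, rfl⟩ := mem_map.1 hp
    exact Nat.prime_nth_prime i

lemma Nk_ne_zero (k : ℕ) : Nk k ≠ 0 :=
  prod_ne_zero_iff.2 fun i _ => (Nat.prime_nth_prime i).ne_zero

lemma Nk_div_totient (k : ℕ) :
    (Nk k : ℝ) / (Nk k).totient =
      ∏ i ∈ range k, (Nat.nth Nat.Prime i : ℝ) / (Nat.nth Nat.Prime i - 1) := by
  rw [div_totient_eq_prod_primeFactors (Nk_ne_zero k), primeFactors_Nk, prod_map]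
  rfl

lemma lt_exp_M_mul_Nk {x : ℝ} (hx : 1 < x) (k : ℕ)
    (h : exp eulerMascheroniConstant * log (log x) < Nk k / (Nk k).totient) :
    x < exp (M k) * Nk k := by
  have hNk : (0 : ℝ) < Nk k := by exact_mod_cast Nat.pos_of_ne_zero (Nk_ne_zero k)
  have hloglog : log (log x) < exp (-eulerMascheroniConstant) * Nk k / (Nk k).totient := by
    rwa [mul_div_assoc, ← mul_lt_mul_iff_right₀ (exp_pos eulerMascheroniConstant), ← mul_assoc,
      ← exp_add, add_neg_cancel, exp_zero, one_mul]
  have hlog : log x < M k + log (Nk k) := by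
    have := exp_lt_exp.2 hloglog
    rw [exp_log (log_pos hx)] at this
    rw [M]
    linarith
  calc x = exp (log x) := (exp_log (by linarith)).symm
    _ < exp (M k + log (Nk k)) := exp_lt_exp.2 hlog
    _ = exp (M k) * Nk k := by rw [exp_add, exp_log hNk]

lemma Nat.primeFactors_ordCompl (n p : ℕ) :
    (n / p ^ n.factorization p).primeFactors = n.primeFactors.erase p := by
  rw [← Nat.support_factorization, Nat.factorization_ordCompl, Finsupp.support_erase,
    Nat.support_factorization]

lemma pow_factorization_pred_mul_prod_primeFactors_le {n q : ℕ} (hn : n ≠ 0) (hq : q.Prime)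
    (hqn : q ∣ n) : q ^ (n.factorization q - 1) * ∏ p ∈ n.primeFactors, p ≤ n := by
  have ha : 1 ≤ n.factorization q := hq.factorization_pos_of_dvd hn hqn
  have hq_mem : q ∈ n.primeFactors := Nat.mem_primeFactors.2 ⟨hq, hqn, hn⟩
  have hcompl : ∏ p ∈ (n / q ^ n.factorization q).primeFactors, p ≤ n / q ^ n.factorization q :=
    Nat.le_of_dvd (Nat.ordCompl_pos q hn) (Nat.prod_primeFactors_dvd _)
  calc q ^ (n.factorization q - 1) * ∏ p ∈ n.primeFactors, p
      = q ^ n.factorization q * ∏ p ∈ (n / q ^ n.factorization q).primeFactors, p := by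
        rw [← mul_prod_erase _ _ hq_mem, Nat.primeFactors_ordCompl, ← mul_assoc, ← pow_succ,
          Nat.sub_add_cancel ha]
    _ ≤ q ^ n.factorization q * (n / q ^ n.factorization q) := Nat.mul_le_mul_left _ hcompl
    _ = n := Nat.ordProj_mul_ordCompl_eq_self n q

theorem least_counterexample_prime_power_bound_general (c : ℕ) (hc : 5041 ≤ c)
    (hcounter : Real.exp Real.eulerMascheroniConstant * Real.log (Real.log c) ≤
      (ArithmeticFunction.sigma 1 c : ℝ) / c) :
    ∀ q : ℕ, q.Prime → q ∣ c →
      (q : ℝ) ^ (c.factorization q) < (q : ℝ) * Real.exp (M c.primeFactors.card) := by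
  intro q hq hqc
  have hc1 : 1 < c := by omega
  set k := c.primeFactors.card
  set a := c.factorization q
  have hprimes : ∀ p ∈ c.primeFactors, p.Prime := fun p => Nat.prime_of_mem_primeFactors
  have hbound : exp eulerMascheroniConstant * log (log c) < Nk k / (Nk k).totient := by
    calc exp eulerMascheroniConstant * log (log c)
        ≤ (ArithmeticFunction.sigma 1 c : ℝ) / c := hcounter
      _ < ∏ p ∈ c.primeFactors, (p : ℝ) / (p - 1) := sigma_one_div_lt_prod_primeFactors hc1
      _ ≤ _ := prod_div_sub_one_le_prod_nth_prime hprimes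
      _ = _ := (Nk_div_totient k).symm
  have hc_lt : (c : ℝ) < exp (M k) * Nk k := lt_exp_M_mul_Nk (by exact_mod_cast hc1) k hbound
  have hrad : q ^ (a - 1) * Nk k ≤ c :=
    (Nat.mul_le_mul_left _ (Nk_card_le_prod hprimes)).trans
      (pow_factorization_pred_mul_prod_primeFactors_le (by omega) hq hqc)
  have hrad' : (q : ℝ) ^ (a - 1) * Nk k ≤ c := by exact_mod_cast hrad
  have hpow : (q : ℝ) ^ (a - 1) < exp (M k) :=
    lt_of_mul_lt_mul_right (hrad'.trans_lt hc_lt) (Nat.cast_nonneg _)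
  calc (q : ℝ) ^ a = q * q ^ (a - 1) := by
        rw [← pow_succ', Nat.sub_add_cancel (hq.factorization_pos_of_dvd (by omega) hqc)]
    _ < q * exp (M k) := mul_lt_mul_of_pos_left hpow (by exact_mod_cast hq.pos)

theorem least_counterexample_prime_power_bound (c : ℕ) (hc : 5041 ≤ c)
    (hcounter : Real.exp Real.eulerMascheroniConstant * Real.log (Real.log c) ≤
      (ArithmeticFunction.sigma 1 c : ℝ) / c)
    (hleast : ∀ m : ℕ, 5041 ≤ m → m < c →
      (ArithmeticFunction.sigma 1 m : ℝ) / m <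
        Real.exp Real.eulerMascheroniConstant * Real.log (Real.log m)) :
    ∀ q : ℕ, q.Prime → q ∣ c →
      (q : ℝ) ^ (c.factorization q) < (q : ℝ) * Real.exp (M c.primeFactors.card) :=
  least_counterexample_prime_power_bound_general c hc hcounter
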